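/- Let H be a real Hilbert space and A, B: D(A), D(B) ⊆ H → H monotone operators such that sI + A and sI + B are bijective from their domains onto H for some s > 0. Let η ∈ D(A) ∩ D(B) satisfy Aη + Bη = 0. Define the Peaceman–Rachford iteration η₁^{n+1} = (sI + A)^{-1}(sI - B)η₂^n, η₂^{n+1} = (sI + B)^{-1}(sI - A)η₁^{n+1}, with η₂^0 ∈ D(B). Then ⟨Aη₁^n - Aη, η₁^n - η⟩ → 0 and ⟨Bη₂^n - Bη, η₂^n - η⟩ → 0 as n → ∞. -/

import Mathlib

open Filter Topology

/-!
For a monotone operator `A`, the reflection `s • u + A u ↦ s • u - A u` is nonexpansive, with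
defect exactly `4 s ⟨A u - A v, u - v⟩`. One Peaceman–Rachford sweep composes the reflections of
`A` and `B` and fixes `s • η - B η` (since `A η = -B η`), so the Lyapunov quantity
`‖(s • η₂ⁿ - B η₂ⁿ) - (s • η - B η)‖²` drops by `4 s (⟨A η₁ⁿ⁺¹ - A η, η₁ⁿ⁺¹ - η⟩ +
⟨B η₂ⁿ⁺¹ - B η, η₂ⁿ⁺¹ - η⟩)` at each step. These nonnegative terms are therefore summable and
tend to zero.
-/

lemma norm_smul_sub_sub_sq {H : Type*} [NormedAddCommGroup H] [InnerProductSpace ℝ H]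
    (A : H → H) (s : ℝ) (u v : H) :
    ‖(s • u - A u) - (s • v - A v)‖ ^ 2 =
      ‖(s • u + A u) - (s • v + A v)‖ ^ 2 - 4 * s * inner ℝ (A u - A v) (u - v) := by
  have hsub : (s • u - A u) - (s • v - A v) = s • (u - v) - (A u - A v) := by
    rw [smul_sub]; abel
  have hadd : (s • u + A u) - (s • v + A v) = s • (u - v) + (A u - A v) := by
    rw [smul_sub]; abel
  rw [hsub, hadd, norm_sub_sq_real, norm_add_sq_real, inner_smul_left, real_inner_comm]
  simp only [conj_trivial]
  ring

lemma summable_of_add_le {c a : ℕ → ℝ} (hc : ∀ n, 0 ≤ c n) (ha : ∀ n, 0 ≤ a n)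
    (h : ∀ n, c (n + 1) + a n ≤ c n) : Summable a := by
  have hsum : ∀ n, (∑ i ∈ Finset.range n, a i) + c n ≤ c 0 := by
    intro n
    induction n with
    | zero => simp
    | succ n ih => rw [Finset.sum_range_succ]; linarith [h n]
  exact summable_of_sum_range_le ha fun n => by linarith [hsum n, hc n]

theorem stmt_10_general {H : Type*} [NormedAddCommGroup H] [InnerProductSpace ℝ H]
    (DA DB : Set H) (A B : H → H) (s : ℝ) (hs : 0 < s)
    (hAmono : ∀ u ∈ DA, ∀ v ∈ DA, (inner ℝ (A u - A v) (u - v) : ℝ) ≥ 0)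
    (hBmono : ∀ u ∈ DB, ∀ v ∈ DB, (inner ℝ (B u - B v) (u - v) : ℝ) ≥ 0)
    (η : H) (hηA : η ∈ DA) (hηB : η ∈ DB) (hη : A η + B η = 0)
    (η₁ η₂ : ℕ → H) (hinit : η₂ 0 ∈ DB)
    (hiter₁ : ∀ n, η₁ (n + 1) ∈ DA ∧
      s • η₁ (n + 1) + A (η₁ (n + 1)) = s • η₂ n - B (η₂ n))
    (hiter₂ : ∀ n, η₂ (n + 1) ∈ DB ∧
      s • η₂ (n + 1) + B (η₂ (n + 1)) = s • η₁ (n + 1) - A (η₁ (n + 1))) :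
    Tendsto (fun n => (inner ℝ (A (η₁ (n + 1)) - A η) (η₁ (n + 1) - η) : ℝ))
        atTop (𝓝 0) ∧
      Tendsto (fun n => (inner ℝ (B (η₂ n) - B η) (η₂ n - η) : ℝ)) atTop (𝓝 0) := by
  set α : ℕ → ℝ := fun n => inner ℝ (A (η₁ (n + 1)) - A η) (η₁ (n + 1) - η)
  set β : ℕ → ℝ := fun n => inner ℝ (B (η₂ n) - B η) (η₂ n - η)
  set c : ℕ → ℝ := fun n => ‖(s • η₂ n - B (η₂ n)) - (s • η - B η)‖ ^ 2
  have hα : ∀ n, 0 ≤ α n := fun n => hAmono _ (hiter₁ n).1 _ hηA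
  have hη₂ : ∀ n, η₂ n ∈ DB
    | 0 => hinit
    | n + 1 => (hiter₂ n).1
  have hβ : ∀ n, 0 ≤ β n := fun n => hBmono _ (hη₂ n) _ hηB
  have hAη : A η = -B η := eq_neg_of_add_eq_zero_left hη
  have hstep : ∀ n, c (n + 1) + 4 * s * (α n + β (n + 1)) = c n := by
    intro n
    have hA := norm_smul_sub_sub_sq A s (η₁ (n + 1)) η
    have hB := norm_smul_sub_sub_sq B s (η₂ (n + 1)) η
    rw [(hiter₁ n).2, show s • η + A η = s • η - B η by rw [hAη, sub_eq_add_neg],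
      show s • η - A η = s • η + B η by rw [hAη, sub_neg_eq_add]] at hA
    rw [(hiter₂ n).2] at hB
    simp only [c, α, β]
    linarith
  have hsum : Summable fun n => α n + β (n + 1) :=
    (summable_mul_left_iff (by positivity : 4 * s ≠ 0)).mp <|
      summable_of_add_le (c := c) (fun n => sq_nonneg _)
        (fun n => by have := hα n; have := hβ (n + 1); positivity) (fun n => (hstep n).le)
  refine ⟨?_, (tendsto_add_atTop_iff_nat 1).mp ?_⟩
  · exact (hsum.of_nonneg_of_le hα fun n => le_add_of_nonneg_right (hβ _)).tendsto_atTop_zero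
  · exact (hsum.of_nonneg_of_le (fun n => hβ _)
      fun n => le_add_of_nonneg_left (hα n)).tendsto_atTop_zero

/-- Abstract Peaceman–Rachford convergence (Lions–Mercier): for monotone operators
`A, B` with `sI + A`, `sI + B` bijective and a solution `η` of `Aη + Bη = 0`, the
iteration satisfies `⟨Aη₁ⁿ - Aη, η₁ⁿ - η⟩ → 0` and `⟨Bη₂ⁿ - Bη, η₂ⁿ - η⟩ → 0`. -/
theorem stmt_10 {H : Type*} [NormedAddCommGroup H] [InnerProductSpace ℝ H]
    (DA DB : Set H) (A B : H → H) (s : ℝ) (hs : 0 < s)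
    (hAmono : ∀ u ∈ DA, ∀ v ∈ DA, (inner ℝ (A u - A v) (u - v) : ℝ) ≥ 0)
    (hBmono : ∀ u ∈ DB, ∀ v ∈ DB, (inner ℝ (B u - B v) (u - v) : ℝ) ≥ 0)
    (hAbij : ∀ w : H, ∃! u, u ∈ DA ∧ s • u + A u = w)
    (hBbij : ∀ w : H, ∃! u, u ∈ DB ∧ s • u + B u = w)
    (η : H) (hηA : η ∈ DA) (hηB : η ∈ DB) (hη : A η + B η = 0)
    (η₁ η₂ : ℕ → H) (hinit : η₂ 0 ∈ DB)
    (hiter₁ : ∀ n, η₁ (n + 1) ∈ DA ∧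
      s • η₁ (n + 1) + A (η₁ (n + 1)) = s • η₂ n - B (η₂ n))
    (hiter₂ : ∀ n, η₂ (n + 1) ∈ DB ∧
      s • η₂ (n + 1) + B (η₂ (n + 1)) = s • η₁ (n + 1) - A (η₁ (n + 1))) :
    Tendsto (fun n => (inner ℝ (A (η₁ (n + 1)) - A η) (η₁ (n + 1) - η) : ℝ))
        atTop (𝓝 0) ∧
      Tendsto (fun n => (inner ℝ (B (η₂ n) - B η) (η₂ n - η) : ℝ)) atTop (𝓝 0) :=
  stmt_10_general DA DB A B s hs hAmono hBmono η hηA hηB hη η₁ η₂ hinit hiter₁ hiter₂
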